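/- With the Rota-Baxter operator of the piecewise extension, the alternative formula ∫(f H̄_a) = (∫_{a⁻} f)·H̄_a − (∫_{a⁺}^0 f)·H_a holds, equivalently ∫(f H_a) = (∫_a f)·H_a + H̄(a)·(∫_0^a f)·1. -/

import Mathlib

/-- The semigroup `(K, max)` unitarized: `WithBot K` under `⊔` with identity `⊥`. -/
def SupMon (K : Type*) := WithBot K

instance SupMon.instCommMonoid {K : Type*} [LinearOrder K] : CommMonoid (SupMon K) where
  mul a b := show WithBot K from (show WithBot K from a) ⊔ (show WithBot K from b)
  one := show WithBot K from ⊥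
  mul_assoc a b c := sup_assoc (α := WithBot K) a b c
  one_mul a := bot_sup_eq (α := WithBot K) a
  mul_one a := sup_bot_eq (α := WithBot K) a
  mul_comm a b := sup_comm (α := WithBot K) a b

/-- The canonical inclusion `K → SupMon K`. -/
def SupMon.up {K : Type*} (a : K) : SupMon K := (a : WithBot K)

/-- The generator `H_a` of the piecewise extension `P(F) = F[K_⊔]`. -/
noncomputable def Hsup (F : Type*) {K : Type*} [CommRing F] [LinearOrder K] (a : K) :
    MonoidAlgebra F (SupMon K) :=
  MonoidAlgebra.of F (SupMon K) (SupMon.up a)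

/-- Shifted Rota-Baxter operator `∫_c f := ∫f − e_c(∫f)·1`. -/
noncomputable def shiftedInt {K F : Type*} [Field K] [LinearOrder K] [IsStrictOrderedRing K] [CommRing F] [Algebra K F]
    (I : F →ₗ[K] F) (e : F →ₐ[K] K) (S : K → F ≃ₐ[K] F) (c : K) (f : F) : F :=
  I f - algebraMap K F (e (S c (I f)))

/-- Definite integral `∫_c^d f := e_d(∫_c f)`. -/
noncomputable def defInt {K F : Type*} [Field K] [LinearOrder K] [IsStrictOrderedRing K] [CommRing F] [Algebra K F]
    (I : F →ₗ[K] F) (e : F →ₐ[K] K) (S : K → F ≃ₐ[K] F) (c d : K) (f : F) : K :=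
  e (S d (shiftedInt I e S c f))

/-- The left-continuous dual Heaviside operator: `H̄(a) = 1` for `a ≤ 0`, else `0`. -/
noncomputable def HbarOp {K : Type*} [Field K] [LinearOrder K] [IsStrictOrderedRing K] (a : K) : K :=
  if a ≤ 0 then 1 else 0


/-!
Write `∫_c f = ∫ f + (∫_c^0 f)·1`, which holds because `e ∘ ∫ = 0` and `S 0 = id`. After this
substitution both formulas are linear identities between `1`, `H_a` and the coefficients
`δ c := ∫_c^0 f`, and the only input beyond linearity is `δ 0 = 0`: it gives
`δ (max a 0) + δ (min a 0) = δ a`, `δ (min a 0) = H̄(a) · δ a` and `∫_0^a f = -δ a`.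
-/

section ShiftedIntegral

variable {K F : Type*} [Field K] [LinearOrder K] [IsStrictOrderedRing K] [CommRing F] [Algebra K F]
  {I : F →ₗ[K] F} {e : F →ₐ[K] K} {S : K → F ≃ₐ[K] F}

theorem defInt_zero_right (heI : ∀ f : F, e (I f) = 0) (hS0 : ∀ f : F, S 0 f = f) (c : K) (f : F) :
    defInt I e S c 0 f = -e (S c (I f)) := by
  simp [defInt, shiftedInt, hS0, heI]

theorem defInt_zero_left (heI : ∀ f : F, e (I f) = 0) (hS0 : ∀ f : F, S 0 f = f) (a : K) (f : F) :
    defInt I e S 0 a f = -defInt I e S a 0 f := by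
  simp [defInt, shiftedInt, hS0, heI]

theorem shiftedInt_eq_add_defInt (heI : ∀ f : F, e (I f) = 0) (hS0 : ∀ f : F, S 0 f = f)
    (c : K) (f : F) : shiftedInt I e S c f = I f + algebraMap K F (defInt I e S c 0 f) := by
  rw [defInt_zero_right heI hS0, map_neg, ← sub_eq_add_neg, shiftedInt]

end ShiftedIntegral

theorem apply_max_zero_add_apply_min_zero {α M : Type*} [LinearOrder α] [Zero α] [AddMonoid M]
    {δ : α → M} (hδ : δ 0 = 0) (a : α) : δ (max a 0) + δ (min a 0) = δ a := by
  rcases le_total a 0 with ha | ha <;> simp [ha, hδ]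

theorem HbarOp_mul_eq_apply_min_zero {K : Type*} [Field K] [LinearOrder K] [IsStrictOrderedRing K]
    {δ : K → K} (hδ : δ 0 = 0) (a : K) : HbarOp a * δ a = δ (min a 0) := by
  rcases le_or_gt a 0 with ha | ha
  · simp [HbarOp, ha]
  · simp [HbarOp, ha.not_ge, ha.le, hδ]

theorem MonoidAlgebra.single_algebraMap {K F M : Type*} [CommSemiring K] [Semiring F] [Algebra K F]
    (m : M) (c : K) : MonoidAlgebra.single m (algebraMap K F c) = c • MonoidAlgebra.single m 1 := by
  rw [Algebra.algebraMap_eq_smul_one, MonoidAlgebra.smul_single]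

theorem piecewise_extension_rb_alternative_formulas_general
        {K F : Type*} [Field K] [LinearOrder K] [IsStrictOrderedRing K] [CommRing F] [Algebra K F]
    (I : F →ₗ[K] F)
    (e : F →ₐ[K] K) (heI : ∀ f : F, e (I f) = 0)
    (S : K → F ≃ₐ[K] F)
    (hS0 : ∀ f : F, S 0 f = f)
    (J : MonoidAlgebra F (SupMon K) →ₗ[K] MonoidAlgebra F (SupMon K))
    (hJone : ∀ f : F,
      J (MonoidAlgebra.single (1 : SupMon K) f) = MonoidAlgebra.single (1 : SupMon K) (I f))
    (hJH : ∀ (a : K) (f : F),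
      J (MonoidAlgebra.single (SupMon.up a) f)
        = MonoidAlgebra.single (SupMon.up a) (shiftedInt I e S (max a 0) f)
          - defInt I e S (min a 0) 0 f •
              ((1 : MonoidAlgebra F (SupMon K))
                - MonoidAlgebra.single (SupMon.up a) (1 : F))) :
    (∀ (a : K) (f : F),
      J (MonoidAlgebra.single (1 : SupMon K) f - MonoidAlgebra.single (SupMon.up a) f)
        = (MonoidAlgebra.single (1 : SupMon K) (shiftedInt I e S (min a 0) f)
            - MonoidAlgebra.single (SupMon.up a) (shiftedInt I e S (min a 0) f))
          - defInt I e S (max a 0) 0 f • MonoidAlgebra.single (SupMon.up a) (1 : F)) ∧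
    (∀ (a : K) (f : F),
      J (MonoidAlgebra.single (SupMon.up a) f)
        = MonoidAlgebra.single (SupMon.up a) (shiftedInt I e S a f)
          + (HbarOp a * defInt I e S 0 a f) • (1 : MonoidAlgebra F (SupMon K))) := by
  have hδ (f : F) : defInt I e S 0 0 f = 0 := by
    simp [defInt_zero_right heI hS0, hS0, heI]
  simp only [MonoidAlgebra.one_def, shiftedInt_eq_add_defInt heI hS0, MonoidAlgebra.single_add,
    MonoidAlgebra.single_algebraMap] at hJH ⊢
  refine ⟨fun a f => ?_, fun a f => ?_⟩
  · rw [map_sub, hJone, hJH]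
    module
  · have hsum := apply_max_zero_add_apply_min_zero (δ := (defInt I e S · 0 f)) (hδ f) a
    have hmin := HbarOp_mul_eq_apply_min_zero (δ := (defInt I e S · 0 f)) (hδ f) a
    rw [hJH, defInt_zero_left heI hS0, mul_neg, hmin, ← hsum]
    module

/-- With the Rota-Baxter operator of the piecewise extension, the alternative formulas
`∫(f H̄_a) = (∫_{a⁻} f)·H̄_a − (∫_{a⁺}^0 f)·H_a` and
`∫(f H_a) = (∫_a f)·H_a + H̄(a)·(∫_0^a f)·1` hold. -/
theorem piecewise_extension_rb_alternative_formulas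
        {K F : Type*} [Field K] [LinearOrder K] [IsStrictOrderedRing K] [CommRing F] [Algebra K F]
    (I : F →ₗ[K] F)
    (hRB : ∀ f g : F, I f * I g = I (f * I g) + I (g * I f))
    (e : F →ₐ[K] K) (heI : ∀ f : F, e (I f) = 0)
    (S : K → F ≃ₐ[K] F)
    (hSadd : ∀ a b : K, ∀ f : F, S (a + b) f = S a (S b f))
    (hS0 : ∀ f : F, S 0 f = f)
    (hcomp : ∀ (c : K) (f : F),
      S c (I f) - I (S c f) = algebraMap K F (e (S c (I f))))
    (hinj : Function.Injective I)
    (hdirect_sup : LinearMap.range I ⊔ Submodule.span K {(1 : F)} = ⊤)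
    (hdirect_inf : LinearMap.range I ⊓ Submodule.span K {(1 : F)} = ⊥)
    (J : MonoidAlgebra F (SupMon K) →ₗ[K] MonoidAlgebra F (SupMon K))
    (hJone : ∀ f : F,
      J (MonoidAlgebra.single (1 : SupMon K) f) = MonoidAlgebra.single (1 : SupMon K) (I f))
    (hJH : ∀ (a : K) (f : F),
      J (MonoidAlgebra.single (SupMon.up a) f)
        = MonoidAlgebra.single (SupMon.up a) (shiftedInt I e S (max a 0) f)
          - defInt I e S (min a 0) 0 f •
              ((1 : MonoidAlgebra F (SupMon K))
                - MonoidAlgebra.single (SupMon.up a) (1 : F))) :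
    (∀ (a : K) (f : F),
      J (MonoidAlgebra.single (1 : SupMon K) f - MonoidAlgebra.single (SupMon.up a) f)
        = (MonoidAlgebra.single (1 : SupMon K) (shiftedInt I e S (min a 0) f)
            - MonoidAlgebra.single (SupMon.up a) (shiftedInt I e S (min a 0) f))
          - defInt I e S (max a 0) 0 f • MonoidAlgebra.single (SupMon.up a) (1 : F)) ∧
    (∀ (a : K) (f : F),
      J (MonoidAlgebra.single (SupMon.up a) f)
        = MonoidAlgebra.single (SupMon.up a) (shiftedInt I e S a f)
          + (HbarOp a * defInt I e S 0 a f) • (1 : MonoidAlgebra F (SupMon K))) :=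
  piecewise_extension_rb_alternative_formulas_general I e heI S hS0 J hJone hJH
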